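/- Let f be an allocation rule for a combinatorial auction over additive valuations with m ≥ 2 items and n ≥ 2 bidders that approximates welfare strictly better than min{m,n}. Let k = max{m,n}. On the profile where bidder 1 has additive valuation v_1^{both} (value 2k²+2 for e_1, 2k² for e_2, 0 otherwise), bidder 2 has v_2^{e1,big} (value 3k⁴ for e_1, 0 otherwise), and each other bidder i has value 1 for e_i only, bidder 1 does not win item e_1. -/
import Mathlib


/-- The additive valuation with per-item values `v`: `val(S) = Σ_{j ∈ S} v j`. -/
noncomputable def addVal {m : ℕ} (v : Fin m → NNReal) (X : Finset (Fin m)) : ℝ :=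
  ∑ j ∈ X, (v j : ℝ)

/-- The item desired by bidder `i`: item `e_i` for `i ≤ m`, and item `e_m` for `i > m`. -/
def eIdx {n : ℕ} (m : ℕ) (hm : 0 < m) (i : Fin n) : Fin m :=
  ⟨min i (m - 1), by omega⟩

/-- The additive valuation with value `1` for item `e` and `0` elsewhere. -/
noncomputable def oneVal {m : ℕ} (e : Fin m) : Fin m → NNReal :=
  fun x => if x = e then 1 else 0

/-- Lemma 4, part 6: Let `f` be a feasible allocation rule over
additive valuations with `m ≥ 2` items and `n ≥ 2` bidders approximating welfare strictly
better than `min {m, n}`, with `k = max {m, n}`. On the profile where bidder `1` has the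
additive valuation `v_1^{both}` (value `2k²+2` for `e_1`, `2k²` for `e_2`, `0` elsewhere),
bidder `2` values only `e_1` at `3k⁴`, and each other bidder `i` values only `e_i` at `1`,
bidder `1` does not win item `e_1`. -/
theorem additive_both_does_not_win_e1
    (m n : ℕ) (hm : 2 ≤ m) (hn : 2 ≤ n)
    (f : (Fin n → Fin m → NNReal) → Fin n → Finset (Fin m))
    (k : ℕ) (hk : k = max m n)
    (c : ℝ) (hc0 : 0 < c) (hc : c < min (m : ℝ) n)
    (i0 : Fin n) (hi0 : i0 = ⟨0, by omega⟩) (i1 : Fin n) (hi1 : i1 = ⟨1, by omega⟩)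
    (e0 : Fin m) (he0 : e0 = ⟨0, by omega⟩) (e1 : Fin m) (he1 : e1 = ⟨1, by omega⟩)
    -- feasibility: the allocation is pairwise disjoint
    (hfeas : ∀ (v : Fin n → Fin m → NNReal) (i j : Fin n), i ≠ j →
      Disjoint (f v i) (f v j))
    -- c-approximation of the optimal welfare
    (happrox : ∀ (v : Fin n → Fin m → NNReal) (a : Fin n → Finset (Fin m)),
      (∀ i j : Fin n, i ≠ j → Disjoint (a i) (a j)) →
      (∑ j, addVal (v j) (a j)) ≤ c * ∑ j, addVal (v j) (f v j))
    (vboth : Fin m → NNReal)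
    (hvboth : vboth = fun x => if x = e0 then 2 * (k : NNReal) ^ 2 + 2
      else if x = e1 then 2 * (k : NNReal) ^ 2 else 0)
    (vbig : Fin m → NNReal)
    (hvbig : vbig = fun x => if x = e0 then 3 * (k : NNReal) ^ 4 else 0)
    (v : Fin n → Fin m → NNReal)
    (hv : v = fun j => if j = i0 then vboth else if j = i1 then vbig
      else oneVal (eIdx m (by omega) j)) :
    e0 ∉ f v i0 := by
  intro hmem
  have hi01 : i0 ≠ i1 := by subst hi0 hi1; simp [Fin.ext_iff]
  have he01 : e0 ≠ e1 := by subst he0 he1; simp [Fin.ext_iff]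
  have hK2 : (2:ℝ) ≤ (k:ℝ) := by exact_mod_cast (by omega : 2 ≤ k)
  have hnK : (n:ℝ) ≤ (k:ℝ) := by
    have : n ≤ k := by omega
    exact_mod_cast this
  have hcK : c < (k:ℝ) := by
    have h1 : min (m:ℝ) (n:ℝ) ≤ (n:ℝ) := min_le_right _ _
    linarith
  -- the candidate allocation
  set a : Fin n → Finset (Fin m) :=
    fun j => if j = i0 then {e1} else if j = i1 then {e0} else ∅ with ha
  have hadisj : ∀ i j : Fin n, i ≠ j → Disjoint (a i) (a j) := by
    intro i j hij
    simp only [ha]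
    split_ifs <;>
      first
        | exact (hij (by subst_vars; rfl)).elim
        | simp [he01, Ne.symm he01]
  have key := happrox v a hadisj
  -- value of each bidder in allocation a
  have hsumL : (∑ j, addVal (v j) (a j)) = 2 * (k:ℝ)^2 + 3 * (k:ℝ)^4 := by
    have hpt : ∀ j : Fin n, addVal (v j) (a j) =
        (if j = i0 then 2 * (k:ℝ)^2 else 0) + (if j = i1 then 3 * (k:ℝ)^4 else 0) := by
      intro j
      by_cases h0 : j = i0
      · rw [h0]
        have hL : addVal (v i0) (a i0) = ((2 * (k:NNReal)^2 : NNReal) : ℝ) := by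
          simp [ha, hv, addVal, hvboth, Ne.symm he01]
        rw [hL, if_pos rfl, if_neg hi01]
        push_cast
        ring
      · by_cases h1 : j = i1
        · rw [h1]
          have hL : addVal (v i1) (a i1) = ((3 * (k:NNReal)^4 : NNReal) : ℝ) := by
            simp [ha, hv, addVal, hvbig, Ne.symm hi01]
          rw [hL, if_neg (Ne.symm hi01), if_pos rfl]
          push_cast
          ring
        · simp [ha, hv, addVal, h0, h1]
    rw [Finset.sum_congr rfl (fun j _ => hpt j), Finset.sum_add_distrib]
    simp [Finset.sum_ite_eq']
  rw [hsumL] at key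
  -- upper bound for welfare of f v
  have hWub : (∑ j, addVal (v j) (f v j)) ≤ 4 * (k:ℝ)^2 + 1 + (n:ℝ) := by
    have hpt : ∀ j : Fin n, addVal (v j) (f v j) ≤
        (if j = i0 then 4 * (k:ℝ)^2 + 2 else if j = i1 then 0 else 1) := by
      intro j
      by_cases h0 : j = i0
      · rw [h0, if_pos rfl]
        have hsub : addVal (v i0) (f v i0) ≤ addVal (v i0) Finset.univ := by
          apply Finset.sum_le_sum_of_subset_of_nonneg (Finset.subset_univ _)
          intro x _ _; positivity
        refine hsub.trans_eq ?_
        have hpt2 : ∀ x : Fin m, ((v i0 x : ℝ)) =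
            (if x = e0 then 2 * (k:ℝ)^2 + 2 else 0) + (if x = e1 then 2 * (k:ℝ)^2 else 0) := by
          intro x
          by_cases hx0 : x = e0
          · rw [hx0]
            simp [hv, hvboth, he01]
            all_goals (push_cast; ring)
          · by_cases hx1 : x = e1
            · rw [hx1]
              simp [hv, hvboth, Ne.symm he01]
            · simp [hv, hvboth, hx0, hx1]
        rw [addVal, Finset.sum_congr rfl (fun x _ => hpt2 x), Finset.sum_add_distrib]
        simp [Finset.sum_ite_eq']
        ring
      · by_cases h1 : j = i1
        · rw [h1, if_neg (Ne.symm hi01), if_pos rfl]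
          have hnotmem : e0 ∉ f v i1 := by
            have := hfeas v i0 i1 hi01
            exact Finset.disjoint_left.mp this hmem
          have hz : addVal (v i1) (f v i1) = 0 := by
            rw [addVal]
            apply Finset.sum_eq_zero
            intro x hx
            have hxne : x ≠ e0 := fun h => hnotmem (h ▸ hx)
            simp [hv, hvbig, Ne.symm hi01, hxne]
          exact hz.le
        · rw [if_neg h0, if_neg h1]
          have hle : addVal (v j) (f v j) ≤ addVal (v j) Finset.univ := by
            apply Finset.sum_le_sum_of_subset_of_nonneg (Finset.subset_univ _)
            intro x _ _; positivity
          refine hle.trans ?_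
          have hone : addVal (v j) Finset.univ = 1 := by
            simp only [addVal, hv, if_neg h0, if_neg h1, oneVal,
              apply_ite (fun q : NNReal => (q : ℝ)), NNReal.coe_one, NNReal.coe_zero]
            simp [Finset.sum_ite_eq']
          exact hone.le
    calc (∑ j, addVal (v j) (f v j))
        ≤ ∑ j, (if j = i0 then 4 * (k:ℝ)^2 + 2 else if j = i1 then 0 else 1) :=
          Finset.sum_le_sum (fun j _ => hpt j)
      _ ≤ 4 * (k:ℝ)^2 + 1 + (n:ℝ) := by
          have hpt3 : ∀ j : Fin n, (if j = i0 then 4 * (k:ℝ)^2 + 2 else if j = i1 then 0 else 1)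
              ≤ 1 + (if j = i0 then 4 * (k:ℝ)^2 + 1 else 0) := by
            intro j
            by_cases h0 : j = i0
            · rw [if_pos h0, if_pos h0]
              linarith
            · by_cases h1 : j = i1
              · rw [if_neg h0, if_pos h1, if_neg h0]
                norm_num
              · rw [if_neg h0, if_neg h1, if_neg h0]
                norm_num
          calc (∑ j, (if j = i0 then 4 * (k:ℝ)^2 + 2 else if j = i1 then 0 else 1))
              ≤ ∑ j : Fin n, (1 + (if j = i0 then 4 * (k:ℝ)^2 + 1 else 0)) :=
                Finset.sum_le_sum (fun j _ => hpt3 j)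
            _ = 4 * (k:ℝ)^2 + 1 + (n:ℝ) := by
                rw [Finset.sum_add_distrib]
                simp [Finset.sum_ite_eq']
                ring
  -- final arithmetic contradiction
  have h1 : c * (∑ j, addVal (v j) (f v j)) ≤ c * (4 * (k:ℝ)^2 + 1 + (n:ℝ)) :=
    mul_le_mul_of_nonneg_left hWub hc0.le
  have h2 : c * (4 * (k:ℝ)^2 + 1 + (n:ℝ)) < (k:ℝ) * (4 * (k:ℝ)^2 + 1 + (k:ℝ)) := by
    have hpos : (0:ℝ) < 4 * (k:ℝ)^2 + 1 + (n:ℝ) := by positivity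
    nlinarith
  have h3 : (0:ℝ) ≤ ((k:ℝ) - 2) * (k:ℝ)^3 :=
    mul_nonneg (by linarith) (by positivity)
  have h4 : (0:ℝ) ≤ (k:ℝ) * (2 * (k:ℝ)^2 - 1) :=
    mul_nonneg (by linarith) (by nlinarith)
  nlinarith [key, h1, h2, h3, h4]
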